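/- In the Lie coalgebra with structure equations df¹ = -f³∧f⁵, df² = -f³∧f⁴, df³ = 0, df⁴ = 0, df⁵ = 0, df⁶ = -f⁴∧f⁵ (the nilpotent Lie algebra (0,0,0,12,13,23) up to relabeling), for every λ ∈ ℝ \ {0,1} the 2-form ω_λ = f¹∧f⁴ + λ f²∧f⁵ + (λ-1) f³∧f⁶ is closed, and the real part of Ω_λ = (f¹+if⁴)∧(f²+iλf⁵)∧(f³+i(λ-1)f⁶) is closed. -/

import Mathlib

/-!
The three terms of `ω_λ` have differentials `f³∧f⁴∧f⁵`, `-λ f³∧f⁴∧f⁵` and `(λ-1) f³∧f⁴∧f⁵`,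
whose coefficients add up to zero. Each of the four terms of `Re Ω_λ` is closed on its own: by the
Leibniz rule its differential is a sum of products of 1-forms in which some `fⁱ` occurs twice, and
such a product vanishes because `fⁱ` anticommutes with every 1-form.
-/

open ExteriorAlgebra

/-- Basis 1-forms f¹,…,f⁶ (indexed 0,…,5). -/
noncomputable def f (i : Fin 6) : ExteriorAlgebra ℝ (Fin 6 → ℝ) :=
  ExteriorAlgebra.ι ℝ (Pi.single i 1)

namespace ExteriorAlgebra

variable {R M : Type*} [CommRing R] [AddCommGroup M] [Module R M]

theorem ι_mul_ι_anticomm (x y : M) : ι R x * ι R y = -(ι R y * ι R x) :=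
  eq_neg_of_add_eq_zero_left (ι_add_mul_swap x y)

theorem ι_mul_mul_ι_self (x : M) (a : ExteriorAlgebra R M) : ι R x * a * ι R x = 0 := by
  induction a using CliffordAlgebra.left_induction with
  | algebraMap r => rw [← Algebra.commutes, mul_assoc, ι_sq_zero, mul_zero]
  | add a b ha hb => rw [mul_add, add_mul, ha, hb, add_zero]
  | ι_mul a y ha =>
    rw [← mul_assoc, ι_mul_ι_anticomm, neg_mul, neg_mul, mul_assoc, mul_assoc,
      ← mul_assoc (ι R x), ha, mul_zero, neg_zero]

theorem ι_mul_ι_mul_self (x : M) (a : ExteriorAlgebra R M) : ι R x * (ι R x * a) = 0 := by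
  rw [← mul_assoc, ι_sq_zero, zero_mul]

theorem ι_mul_ι_mul_ι_self (x y : M) : ι R x * (ι R y * ι R x) = 0 := by
  rw [← mul_assoc, ι_mul_mul_ι_self]

theorem ι_mul_ι_mul_ι_mul_self (x y : M) (a : ExteriorAlgebra R M) :
    ι R x * (ι R y * (ι R x * a)) = 0 := by
  rw [← mul_assoc, ← mul_assoc, ι_mul_mul_ι_self, zero_mul]

theorem ι_mul_ι_mul_ι_mul_ι_self (x y z : M) : ι R x * (ι R y * (ι R z * ι R x)) = 0 := by
  rw [← mul_assoc (ι R y), ← mul_assoc, ι_mul_mul_ι_self]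

end ExteriorAlgebra

theorem stmt15_general (l : ℝ)
    (d : ExteriorAlgebra ℝ (Fin 6 → ℝ) →ₗ[ℝ] ExteriorAlgebra ℝ (Fin 6 → ℝ))
    (hder : ∀ (x : Fin 6 → ℝ) (ω : ExteriorAlgebra ℝ (Fin 6 → ℝ)),
      d (ExteriorAlgebra.ι ℝ x * ω) = d (ExteriorAlgebra.ι ℝ x) * ω -
        ExteriorAlgebra.ι ℝ x * d ω)
    (h1 : d (f 0) = -(f 2 * f 4))
    (h2 : d (f 1) = -(f 2 * f 3))
    (h3 : d (f 2) = 0) (h4 : d (f 3) = 0) (h5 : d (f 4) = 0)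
    (h6 : d (f 5) = -(f 3 * f 4)) :
    d (f 0 * f 3 + l • (f 1 * f 4) + (l - 1) • (f 2 * f 5)) = 0 ∧
      d (f 0 * f 1 * f 2 - (l * (l - 1)) • (f 0 * f 4 * f 5) -
        (l - 1) • (f 3 * f 1 * f 5) - l • (f 3 * f 4 * f 2)) = 0 := by
  have leibniz (i : Fin 6) (ω : ExteriorAlgebra ℝ (Fin 6 → ℝ)) :
      d (f i * ω) = d (f i) * ω - f i * d ω :=
    hder _ ω
  have hω : d (f 0 * f 3 + l • (f 1 * f 4) + (l - 1) • (f 2 * f 5)) =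
      (1 - l + (l - 1)) • (f 2 * (f 3 * f 4)) := by
    simp only [map_add, map_smul, leibniz, h1, h2, h3, h4, h5, h6, mul_zero, zero_mul, sub_zero,
      zero_sub, neg_mul, mul_neg, neg_neg, mul_assoc]
    simp only [f]
    rw [ι_mul_ι_anticomm (Pi.single 4 1) (Pi.single 3 1), mul_neg, neg_neg]
    module
  have hΩ : d (f 0 * f 1 * f 2) = 0 ∧ d (f 0 * f 4 * f 5) = 0 ∧
      d (f 3 * f 1 * f 5) = 0 ∧ d (f 3 * f 4 * f 2) = 0 := by
    refine ⟨?_, ?_, ?_, ?_⟩ <;>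
      simp only [mul_assoc, leibniz, h1, h2, h3, h4, h5, h6, mul_sub, mul_neg, neg_mul,
        mul_zero, zero_mul, sub_zero, zero_sub]
    all_goals simp only [f, ι_mul_ι_mul_self, ι_mul_ι_mul_ι_self, ι_mul_ι_mul_ι_mul_self,
      ι_mul_ι_mul_ι_mul_ι_self, mul_zero, neg_zero, sub_zero]
  obtain ⟨hΩ₁, hΩ₂, hΩ₃, hΩ₄⟩ := hΩ
  refine ⟨by rw [hω, show 1 - l + (l - 1) = 0 by ring, zero_smul], ?_⟩
  simp only [map_sub, map_smul, hΩ₁, hΩ₂, hΩ₃, hΩ₄, smul_zero, sub_zero]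

/-- In the Lie coalgebra with df¹ = -f³∧f⁵, df² = -f³∧f⁴, df³ = df⁴ = df⁵ = 0,
df⁶ = -f⁴∧f⁵ (the nilpotent Lie algebra (0,0,0,12,13,23)), for every λ ∉ {0,1}
the 2-form ω_λ = f¹∧f⁴ + λ f²∧f⁵ + (λ-1) f³∧f⁶ is closed, and the real part
Re Ω_λ = f¹∧f²∧f³ - λ(λ-1) f¹∧f⁵∧f⁶ - (λ-1) f⁴∧f²∧f⁶ - λ f⁴∧f⁵∧f³ of
Ω_λ = (f¹+if⁴)∧(f²+iλf⁵)∧(f³+i(λ-1)f⁶) is closed. -/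
theorem stmt15 (l : ℝ) (hl0 : l ≠ 0) (hl1 : l ≠ 1)
    (d : ExteriorAlgebra ℝ (Fin 6 → ℝ) →ₗ[ℝ] ExteriorAlgebra ℝ (Fin 6 → ℝ))
    (hone : d 1 = 0)
    (hder : ∀ (x : Fin 6 → ℝ) (ω : ExteriorAlgebra ℝ (Fin 6 → ℝ)),
      d (ExteriorAlgebra.ι ℝ x * ω) = d (ExteriorAlgebra.ι ℝ x) * ω -
        ExteriorAlgebra.ι ℝ x * d ω)
    (h1 : d (f 0) = -(f 2 * f 4))
    (h2 : d (f 1) = -(f 2 * f 3))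
    (h3 : d (f 2) = 0) (h4 : d (f 3) = 0) (h5 : d (f 4) = 0)
    (h6 : d (f 5) = -(f 3 * f 4)) :
    d (f 0 * f 3 + l • (f 1 * f 4) + (l - 1) • (f 2 * f 5)) = 0 ∧
      d (f 0 * f 1 * f 2 - (l * (l - 1)) • (f 0 * f 4 * f 5) -
        (l - 1) • (f 3 * f 1 * f 5) - l • (f 3 * f 4 * f 2)) = 0 :=
  stmt15_general l d hder h1 h2 h3 h4 h5 h6
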